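/- arXiv:1603.04109 — 4 statements merged into one kernel-verified Lean document; each statement's English description precedes it below -/
import Mathlib

section
/- A hypergraph H=(V,E) admits a decomposition of its edge set into k edge-disjoint map-graphs (spanning subgraphs each admitting an orientation where every vertex has out-degree exactly one) if and only if H is (k,0)-tight, i.e. |E| = k|V| and every vertex-induced subgraph H'=(V',E') satisfies |E'| ≤ k|V'|. -/
/-!
Encode a decomposition into `k` map-graphs as a map `e ↦ (j, τ e)` sending each edge to its
map-graph `j` and its tail `τ e ∈ e`; the decomposition condition says exactly that this map is a
bijection onto `Fin k × V`. Injective such maps are the matchings of Hall's theorem for the family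
`e ↦ Fin k × e`, whose Hall condition is `(k,0)`-sparsity, and an injection between sets of equal
size is a bijection, which is where `|E| = k|V|` enters.
-/

open Finset Function

theorem forall_card_filter_eq_one_iff_bijective {α β γ : Type*} [Fintype α] [DecidableEq β]
    [DecidableEq γ] (f : α → β) (g : α → γ) :
    (∀ b c, #{a | f a = b ∧ g a = c} = 1) ↔ Bijective fun a => (f a, g a) := by
  simp only [bijective_iff_existsUnique, Prod.forall, Prod.mk.injEq,
    Fintype.existsUnique_iff_card_one]

theorem exists_injective_orientation_iff_sparse {V : Type*} [DecidableEq V] (k : ℕ)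
    (E : Finset (Finset V)) :
    (∃ f : E → Fin k × V, Injective f ∧ ∀ e, (f e).2 ∈ e.1) ↔
      ∀ V' : Finset V, #{e ∈ E | e ⊆ V'} ≤ k * #V' := by
  have hall := all_card_le_biUnion_card_iff_exists_injective
    fun e : E => (univ : Finset (Fin k)) ×ˢ e.1
  simp only [mem_product, mem_univ, true_and] at hall
  have biUnion_product (s : Finset E) :
      s.biUnion (fun e => (univ : Finset (Fin k)) ×ˢ e.1) = univ ×ˢ s.biUnion Subtype.val := by
    ext; simp
  simp only [← hall, biUnion_product]
  constructor
  · intro h V'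
    calc #{e ∈ E | e ⊆ V'}
        ≤ #{e ∈ E.attach | e.1 ⊆ V'} :=
          card_le_card_of_surjOn Subtype.val fun e he =>
            ⟨⟨e, (mem_filter.mp he).1⟩, by simpa using (mem_filter.mp he).2, rfl⟩
      _ ≤ #(univ ×ˢ {e ∈ E.attach | e.1 ⊆ V'}.biUnion Subtype.val) := h _
      _ ≤ #(univ ×ˢ V') := card_le_card <| product_subset_product_right <|
          biUnion_subset.mpr fun e he => (mem_filter.mp he).2
      _ = k * #V' := by simp
  · intro h s
    calc #s ≤ #{e ∈ E | e ⊆ s.biUnion Subtype.val} :=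
          card_le_card_of_injOn Subtype.val
            (fun e he => mem_filter.mpr ⟨e.2, subset_biUnion_of_mem Subtype.val he⟩)
            Subtype.val_injective.injOn
      _ ≤ k * #(s.biUnion Subtype.val) := h _
      _ = #(univ ×ˢ s.biUnion Subtype.val) := by simp

theorem stmt0_general {V : Type*} [Fintype V] [DecidableEq V] (k : ℕ)
    (E : Finset (Finset V)) :
    (∃ (part : {e // e ∈ E} → Fin k) (τ : {e // e ∈ E} → V),
      (∀ e, τ e ∈ e.1) ∧
      ∀ j : Fin k, ∀ v : V,
        (Finset.univ.filter (fun e : {e // e ∈ E} => part e = j ∧ τ e = v)).card = 1) ↔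
    (E.card = k * Fintype.card V ∧
      ∀ V' : Finset V, (E.filter (fun e => e ⊆ V')).card ≤ k * V'.card) := by
  simp only [forall_card_filter_eq_one_iff_bijective]
  constructor
  · rintro ⟨part, τ, hτ, hbij⟩
    refine ⟨?_, (exists_injective_orientation_iff_sparse k E).mp ⟨_, hbij.injective, hτ⟩⟩
    simpa [mul_comm] using Fintype.card_of_bijective hbij
  · rintro ⟨hcard, hsparse⟩
    obtain ⟨f, hinj, hf⟩ := (exists_injective_orientation_iff_sparse k E).mpr hsparse
    have hbij : Bijective f :=
      (Fintype.bijective_iff_injective_and_card f).mpr ⟨hinj, by simp [hcard]⟩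
    exact ⟨fun e => (f e).1, fun e => (f e).2, hf, hbij⟩

/-- A hypergraph admits a decomposition of its edge set into `k` edge-disjoint
map-graphs (each admitting an orientation with every vertex of out-degree exactly one)
iff it is `(k,0)`-tight. -/
theorem stmt0 {V : Type*} [Fintype V] [DecidableEq V] (k : ℕ)
    (E : Finset (Finset V)) (hne : ∀ e ∈ E, e.Nonempty) :
    (∃ (part : {e // e ∈ E} → Fin k) (τ : {e // e ∈ E} → V),
      (∀ e, τ e ∈ e.1) ∧
      ∀ j : Fin k, ∀ v : V,
        (Finset.univ.filter (fun e : {e // e ∈ E} => part e = j ∧ τ e = v)).card = 1) ↔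
    (E.card = k * Fintype.card V ∧
      ∀ V' : Finset V, (E.filter (fun e => e ⊆ V')).card ≤ k * V'.card) :=
  stmt0_general k E
end

section
/- Let F : R^n → R^m be continuously differentiable with F(p)=0, and suppose the Jacobian DF(p) has rank r < n. Assume there is an r×r invertible submatrix of DF(p) using rows E* and columns p*. Then there exists a nonconstant continuously differentiable path p(t) with p(0)=p through solutions of the equations indexed by E*, giving a finite flex; in particular, the solution set of the subsystem {F_i = 0 : i ∈ E*} near p is a manifold of dimension n − r > 0. -/
/-!
Adjoin to the equations indexed by `E*` the coordinates outside the columns `S`. The resulting map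
`Φ : ℝⁿ → ℝʳ × ℝⁿ⁻ʳ` has invertible derivative at `p` because the `E* × S` minor of the Jacobian is
invertible, so by the inverse function theorem it is a local diffeomorphism. Its local inverse on
the slice `{0} × ℝⁿ⁻ʳ` parametrizes the solutions of the subsystem near `p`; precomposing with a
diffeomorphism of `ℝⁿ⁻ʳ` onto a small ball makes this parametrization globally defined and `C¹`,
and its restriction to a line through `0` is the flex.
-/

open Set Filter Topology Function
open scoped ContDiff Matrix

section LocalParametrization

variable {E G H : Type*}
  [NormedAddCommGroup E] [NormedSpace ℝ E] [CompleteSpace E]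
  [NormedAddCommGroup G] [NormedSpace ℝ G]
  [NormedAddCommGroup H] [NormedSpace ℝ H] [FiniteDimensional ℝ H]

theorem exists_contDiff_injective_range_mem_nhds {s : Set H} (hs : s ∈ 𝓝 0) :
    ∃ β : H → H, ContDiff ℝ ∞ β ∧ β 0 = 0 ∧ Injective β ∧ range β ∈ 𝓝 0 ∧ range β ⊆ s := by
  set e := toEuclidean (E := H)
  obtain ⟨ε, hε, hball⟩ := Metric.mem_nhds_iff.1 <|
    e.symm.continuous.continuousAt.preimage_mem_nhds (x := 0) (by simpa using hs)
  set B := OpenPartialHomeomorph.univBall (0 : EuclideanSpace ℝ (Fin (Module.finrank ℝ H))) ε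
  have hsource : B.source = univ := OpenPartialHomeomorph.univBall_source _ _
  have hrange : range (e.symm ∘ B ∘ e) = e ⁻¹' Metric.ball 0 ε := by
    rw [range_comp, range_comp, e.surjective.range_eq, ← hsource, B.image_source_eq_target,
      OpenPartialHomeomorph.univBall_target _ hε, e.image_symm_eq_preimage]
  refine ⟨e.symm ∘ B ∘ e, ?_, ?_, ?_, ?_, ?_⟩
  · exact e.symm.contDiff.comp (OpenPartialHomeomorph.contDiff_univBall.comp e.contDiff)
  · simp [B, OpenPartialHomeomorph.univBall_apply_zero]
  · refine e.symm.injective.comp (Injective.comp ?_ e.injective)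
    exact injOn_univ.1 (hsource ▸ B.injOn)
  · rw [hrange]
    exact e.continuous.continuousAt.preimage_mem_nhds (by simpa using Metric.ball_mem_nhds 0 hε)
  · rw [hrange, ← e.image_symm_eq_preimage]
    exact image_subset_iff.2 hball

theorem exists_contDiff_bijOn_fst_eq_zero {n : ℕ} (hn : n ≠ 0) {Φ : E → G × H}
    {Φ' : E ≃L[ℝ] G × H} {p : E} (hΦ : ContDiffAt ℝ n Φ p)
    (hΦ' : HasFDerivAt Φ (Φ' : E →L[ℝ] G × H) p) (hΦp : Φ p = 0) :
    ∃ U ∈ 𝓝 p, ∃ g : H → E, ContDiff ℝ n g ∧ g 0 = p ∧ BijOn g univ {q ∈ U | (Φ q).1 = 0} := by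
  have hn' : (n : WithTop ℕ∞) ≠ 0 := by exact_mod_cast hn
  set PH := hΦ.toOpenPartialHomeomorph Φ hΦ' hn'
  have hp : p ∈ PH.source := hΦ.mem_toOpenPartialHomeomorph_source hΦ' hn'
  have hψ : ∀ᶠ y in 𝓝 (Φ p), ContDiffAt ℝ n PH.symm y ∧ y ∈ PH.target :=
    ((hΦ.to_localInverse hΦ' hn').eventually (by simp)).and
      (PH.open_target.mem_nhds (hΦ.image_mem_toOpenPartialHomeomorph_target hΦ' hn'))
  have hslice : ∀ᶠ h in 𝓝 (0 : H), ContDiffAt ℝ n PH.symm (0, h) ∧ ((0 : G), h) ∈ PH.target :=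
    (continuous_const.prodMk continuous_id).tendsto' 0 (Φ p) (by simp [hΦp]) |>.eventually hψ
  obtain ⟨β, hβ, hβ0, hβinj, hβnhds, hβsub⟩ := exists_contDiff_injective_range_mem_nhds hslice
  have hΦg : ∀ w, Φ (PH.symm (0, β w)) = (0, β w) := fun w => PH.right_inv (hβsub ⟨w, rfl⟩).2
  have hU : PH.source ∩ Φ ⁻¹' (univ ×ˢ range β) ∈ 𝓝 p := by
    refine inter_mem (PH.open_source.mem_nhds hp) (hΦ.continuousAt.preimage_mem_nhds ?_)
    rw [hΦp]
    exact prod_mem_nhds univ_mem hβnhds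
  refine ⟨_, hU, fun w => PH.symm (0, β w), ?_, ?_, ⟨?_, ?_, ?_⟩⟩
  · have hβn : ContDiff ℝ n β := hβ.of_le (by exact_mod_cast le_top)
    exact contDiff_iff_contDiffAt.2 fun w =>
      (hβsub ⟨w, rfl⟩).1.comp w (contDiffAt_const.prodMk hβn.contDiffAt)
  · change PH.symm (0, β 0) = p
    rw [hβ0, Prod.mk_zero_zero, ← hΦp]
    exact PH.left_inv hp
  · intro w _
    exact ⟨⟨PH.map_target (hβsub ⟨w, rfl⟩).2, by simp [hΦg]⟩, by simp [hΦg]⟩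
  · intro w₁ _ w₂ _ h
    exact hβinj (by simpa [hΦg] using congrArg Φ h)
  · rintro q ⟨⟨hq, -, w, hw⟩, hq0⟩
    refine ⟨w, trivial, ?_⟩
    have : ((0 : G), β w) = Φ q := Prod.ext hq0.symm hw
    change PH.symm (0, β w) = q
    rw [this]
    exact PH.left_inv hq

end LocalParametrization

theorem exists_contDiff_path_ne_of_injective {V E : Type*} [NormedAddCommGroup V]
    [NormedSpace ℝ V] [Nontrivial V] [NormedAddCommGroup E] [NormedSpace ℝ E] {n : WithTop ℕ∞}
    {g : V → E}
    (hg : ContDiff ℝ n g) (hinj : Injective g) :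
    ∃ γ : ℝ → E, ContDiff ℝ n γ ∧ γ 0 = g 0 ∧ (∃ t, γ t ≠ g 0) ∧ ∀ t, γ t ∈ range g := by
  obtain ⟨v, hv⟩ := exists_ne (0 : V)
  refine ⟨fun t => g (t • v), hg.comp (contDiff_id.smul contDiff_const), by simp, ⟨1, ?_⟩,
    fun t => mem_range_self _⟩
  simpa using hinj.ne hv

theorem Matrix.eq_zero_of_rank_submatrix_eq_card {K ι κ : Type*} [Field K] [Fintype κ]
    {J : Matrix ι κ K} {E : Finset ι} {S : Finset κ}
    (hJ : (J.submatrix (Subtype.val : E → ι) (Subtype.val : S → κ)).rank = S.card)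
    {v : κ → K} (hvS : ∀ j ∉ S, v j = 0) (hJv : ∀ i ∈ E, (J *ᵥ v) i = 0) : v = 0 := by
  set M := J.submatrix (Subtype.val : E → ι) (Subtype.val : S → κ)
  have hker : LinearMap.ker M.mulVecLin = ⊥ := by
    have := LinearMap.finrank_range_add_finrank_ker M.mulVecLin
    rw [← Matrix.rank, hJ, Module.finrank_fintype_fun_eq_card, Fintype.card_coe] at this
    exact Submodule.finrank_eq_zero.1 (by omega)
  have hMv : M *ᵥ (fun j : S => v j) = 0 := by
    ext i
    rw [Pi.zero_apply, ← hJv i i.2, Matrix.mulVec, Matrix.mulVec, dotProduct, dotProduct]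
    refine (Finset.sum_coe_sort S fun j => J i j * v j).trans (Finset.sum_subset S.subset_univ ?_)
    intro j _ hj
    rw [hvS j hj, mul_zero]
  have hvS' := Matrix.ker_mulVecLin_eq_bot_iff.1 hker _ hMv
  ext j
  by_cases hj : j ∈ S
  · exact congrFun hvS' ⟨j, hj⟩
  · exact hvS j hj

def Finset.restrictCLM {ι : Type*} (s : Finset ι) : (ι → ℝ) →L[ℝ] (s → ℝ) :=
  ContinuousLinearMap.pi fun i => ContinuousLinearMap.proj (i : ι)

@[simp]
theorem Finset.restrictCLM_apply {ι : Type*} (s : Finset ι) (f : ι → ℝ) :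
    s.restrictCLM f = s.restrict f :=
  rfl

section Subsystem

variable {ι κ : Type*} [Fintype κ] [DecidableEq κ]

theorem injective_restrictCLM_comp_prod_restrictCLM_compl (f : (κ → ℝ) →L[ℝ] (ι → ℝ))
    {E : Finset ι} {S : Finset κ}
    (hf : ((LinearMap.toMatrix' (f : (κ → ℝ) →ₗ[ℝ] (ι → ℝ))).submatrix
      (Subtype.val : E → ι) (Subtype.val : S → κ)).rank = S.card) :
    Injective ((E.restrictCLM ∘L f).prod Sᶜ.restrictCLM) := by
  refine (injective_iff_map_eq_zero _).2 fun v hv => ?_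
  obtain ⟨hfv, hvS⟩ := Prod.ext_iff.1 hv
  refine Matrix.eq_zero_of_rank_submatrix_eq_card hf (fun j hj => ?_) (fun i hi => ?_)
  · exact congrFun hvS ⟨j, Finset.mem_compl.2 hj⟩
  · rw [LinearMap.toMatrix'_mulVec]
    exact congrFun hfv ⟨i, hi⟩

theorem exists_contDiff_bijOn_subsystem [Fintype ι] {n : ℕ} (hn : n ≠ 0)
    {F : (κ → ℝ) → (ι → ℝ)} {p : κ → ℝ} (hF : ContDiffAt ℝ n F p) {E : Finset ι} {S : Finset κ}
    (hp : ∀ i ∈ E, F p i = 0) (hES : E.card = S.card)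
    (hsub : ((LinearMap.toMatrix' (fderiv ℝ F p : (κ → ℝ) →ₗ[ℝ] (ι → ℝ))).submatrix
      (Subtype.val : E → ι) (Subtype.val : S → κ)).rank = S.card) :
    ∃ U ∈ 𝓝 p, ∃ g : (↥Sᶜ → ℝ) → (κ → ℝ), ContDiff ℝ n g ∧ g 0 = p ∧
      BijOn g univ {q ∈ U | ∀ i ∈ E, F q i = 0} := by
  set A := (E.restrictCLM ∘L fderiv ℝ F p).prod Sᶜ.restrictCLM
  have hdim : Module.finrank ℝ (κ → ℝ) = Module.finrank ℝ ((E → ℝ) × (↥Sᶜ → ℝ)) := by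
    have := S.card_le_univ
    simp [hES]
    omega
  set Φ' := (LinearMap.linearEquivOfInjective (A : (κ → ℝ) →ₗ[ℝ] (E → ℝ) × (↥Sᶜ → ℝ))
    (injective_restrictCLM_comp_prod_restrictCLM_compl _ hsub) hdim).toContinuousLinearEquiv
  set Φ : (κ → ℝ) → (E → ℝ) × (↥Sᶜ → ℝ) :=
    fun q => (E.restrictCLM (F q), Sᶜ.restrictCLM q - Sᶜ.restrictCLM p)
  have hF' := (hF.differentiableAt (by exact_mod_cast hn)).hasFDerivAt
  have hΦ' : HasFDerivAt Φ (Φ' : (κ → ℝ) →L[ℝ] (E → ℝ) × (↥Sᶜ → ℝ)) p :=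
    (E.restrictCLM.hasFDerivAt.comp p hF').prodMk (Sᶜ.restrictCLM.hasFDerivAt.sub_const _)
  have hΦ : ContDiffAt ℝ n Φ p :=
    (E.restrictCLM.contDiff.contDiffAt.comp p hF).prodMk
      (Sᶜ.restrictCLM.contDiff.contDiffAt.sub contDiffAt_const)
  obtain ⟨U, hU, g, hg, hg0, hbij⟩ := exists_contDiff_bijOn_fst_eq_zero hn hΦ hΦ'
    (Prod.ext (funext fun i => hp i i.2) (sub_self _))
  refine ⟨U, hU, g, hg, hg0, ?_⟩
  convert hbij using 4 with q
  simp [Φ, funext_iff]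

end Subsystem

theorem stmt9_general (n m r : ℕ) (hr : r < n)
    (F : (Fin n → ℝ) → (Fin m → ℝ)) (hF : ContDiff ℝ 1 F)
    (p : Fin n → ℝ) (hp : F p = 0)
    (J : Matrix (Fin m) (Fin n) ℝ)
    (hJ : J = Matrix.of fun i j => fderiv ℝ F p (Pi.single j 1) i)
    (Estar : Finset (Fin m)) (S : Finset (Fin n))
    (hE : Estar.card = r) (hS : S.card = r)
    (hsub : (J.submatrix (Subtype.val : {i // i ∈ Estar} → Fin m)
        (Subtype.val : {j // j ∈ S} → Fin n)).rank = r) :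
    (∃ γ : ℝ → (Fin n → ℝ), ContDiff ℝ 1 γ ∧ γ 0 = p ∧ (∃ t, γ t ≠ p) ∧
      ∀ t : ℝ, ∀ i ∈ Estar, F (γ t) i = 0) ∧
    (∃ U ∈ nhds p, ∃ W ∈ nhds (0 : Fin (n - r) → ℝ),
      ∃ g : (Fin (n - r) → ℝ) → (Fin n → ℝ), ContDiff ℝ 1 g ∧ g 0 = p ∧
        Set.BijOn g W {q ∈ U | ∀ i ∈ Estar, F q i = 0}) := by
  have hJ_toMatrix : J = LinearMap.toMatrix' (fderiv ℝ F p : (Fin n → ℝ) →ₗ[ℝ] (Fin m → ℝ)) := by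
    ext i j
    simp [hJ, LinearMap.toMatrix'_apply]
  obtain ⟨U, hU, g, hg, hg0, hbij⟩ := exists_contDiff_bijOn_subsystem one_ne_zero
    (p := p) (by simpa using hF.contDiffAt) (fun i _ => by simp [hp]) (hE.trans hS.symm)
    (by rw [← hJ_toMatrix, hsub, hS])
  let e : (Fin (n - r) → ℝ) ≃L[ℝ] (↥Sᶜ → ℝ) := .ofFinrankEq (by simp [hS])
  have hbij' := hbij.comp e.bijective.bijOn_univ
  have hge : ContDiff ℝ 1 (g ∘ e) := by simpa using hg.comp e.contDiff
  have : NeZero (n - r) := ⟨by omega⟩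
  obtain ⟨γ, hγ, hγ0, hγne, hγg⟩ :=
    exists_contDiff_path_ne_of_injective hge (injOn_univ.1 hbij'.injOn)
  have hge0 : (g ∘ e) 0 = p := by simp [hg0]
  refine ⟨⟨γ, hγ, hγ0.trans hge0, hge0 ▸ hγne, fun t => ?_⟩,
    U, hU, univ, univ_mem, g ∘ e, hge, hge0, hbij'⟩
  obtain ⟨w, hw⟩ := hγg t
  exact hw ▸ (hbij'.mapsTo trivial).2

/-- If `F : ℝ^n → ℝ^m` is `C¹` with `F(p) = 0` and its Jacobian at `p` has rank
`r < n`, with an invertible `r×r` submatrix on rows `E*` and columns `S`, then there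
is a nonconstant `C¹` path through solutions of the subsystem indexed by `E*`
(a finite flex), and near `p` the solution set of that subsystem is parametrized by a
`C¹` map from an `(n−r)`-dimensional neighborhood (a manifold of dimension `n−r > 0`). -/
theorem stmt9 (n m r : ℕ) (hr : r < n)
    (F : (Fin n → ℝ) → (Fin m → ℝ)) (hF : ContDiff ℝ 1 F)
    (p : Fin n → ℝ) (hp : F p = 0)
    (J : Matrix (Fin m) (Fin n) ℝ)
    (hJ : J = Matrix.of fun i j => fderiv ℝ F p (Pi.single j 1) i)
    (hrank : J.rank = r)
    (Estar : Finset (Fin m)) (S : Finset (Fin n))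
    (hE : Estar.card = r) (hS : S.card = r)
    (hsub : (J.submatrix (Subtype.val : {i // i ∈ Estar} → Fin m)
        (Subtype.val : {j // j ∈ S} → Fin n)).rank = r) :
    (∃ γ : ℝ → (Fin n → ℝ), ContDiff ℝ 1 γ ∧ γ 0 = p ∧ (∃ t, γ t ≠ p) ∧
      ∀ t : ℝ, ∀ i ∈ Estar, F (γ t) i = 0) ∧
    (∃ U ∈ nhds p, ∃ W ∈ nhds (0 : Fin (n - r) → ℝ),
      ∃ g : (Fin (n - r) → ℝ) → (Fin n → ℝ), ContDiff ℝ 1 g ∧ g 0 = p ∧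
        Set.BijOn g W {q ∈ U | ∀ i ∈ Estar, F q i = 0}) :=
  stmt9_general n m r hr F hF p hp J hJ Estar S hE hS hsub
end

section
/- For sparsity s < d, let k be the smallest positive integer such that C(k(d−s), s) ≥ k(d−1). Then there exists a hypergraph H_0 on k(d−s) vertices with k(d−1) distinct hyperedges, each of cardinality s, such that assigning each hyperedge weight m=1, the expanded multi-hypergraph (each hyperedge replaced by d−s copies) is ((d−1),0)-tight. -/
/-!
Put the `n = k(d-s)` cyclic intervals of length `s` of `ℤ/n` into the hypergraph and add
`k(s-1)` further `s`-sets. A proper vertex set `V` contains at most `|V| - (s-1)` cyclic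
intervals (a nonempty proper subset of `ℤ/n` is not closed under `x ↦ x + 1`, so every
lengthening of the intervals adds a point), which gives the count when `|V| > (k-1)(d-s)`.
For smaller `V` it suffices that the edges inside `V` are `s`-subsets of `V`: `C(v,s)/v`
increases with `v`, and minimality of `k` says `C((k-1)(d-s), s) < (k-1)(d-1)`.
-/

open Finset
open Fin.NatCast Fin.CommRing

section CyclicInterval

variable {n : ℕ} [NeZero n]

def cyclicInterval (s : ℕ) (a : Fin n) : Finset (Fin n) :=
  (range s).image fun j : ℕ => a + j

lemma mem_cyclicInterval {s : ℕ} {a x : Fin n} :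
    x ∈ cyclicInterval s a ↔ ∃ j < s, a + j = x := by
  simp [cyclicInterval]

lemma mem_cyclicInterval_iff_val_sub_lt {s : ℕ} (hsn : s ≤ n) {a x : Fin n} :
    x ∈ cyclicInterval s a ↔ (x - a).val < s := by
  rw [mem_cyclicInterval]
  constructor
  · rintro ⟨j, hj, rfl⟩
    rwa [add_sub_cancel_left, Fin.val_natCast, Nat.mod_eq_of_lt (hj.trans_le hsn)]
  · exact fun h => ⟨_, h, by rw [Fin.cast_val_eq_self, add_sub_cancel]⟩

lemma card_cyclicInterval {s : ℕ} (hsn : s ≤ n) (a : Fin n) : #(cyclicInterval s a) = s := by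
  rw [cyclicInterval, card_image_of_injOn, card_range]
  intro i hi j hj hij
  have hi : i < n := (mem_range.1 hi).trans_le hsn
  have hj : j < n := (mem_range.1 hj).trans_le hsn
  simpa [Fin.val_natCast, Nat.mod_eq_of_lt, hi, hj] using congrArg Fin.val (add_left_cancel hij)

lemma sub_one_mem_cyclicInterval {s : ℕ} (hsn : s ≤ n) {a x : Fin n}
    (hx : x ∈ cyclicInterval s a) (hxa : x ≠ a) : x - 1 ∈ cyclicInterval s a := by
  rw [mem_cyclicInterval_iff_val_sub_lt hsn] at hx ⊢
  rw [sub_right_comm, Fin.val_sub_one_of_ne_zero (sub_ne_zero.2 hxa)]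
  omega

lemma sub_one_notMem_cyclicInterval {s : ℕ} (hsn : s < n) (a : Fin n) :
    a - 1 ∉ cyclicInterval s a := by
  obtain ⟨m, rfl⟩ := Nat.exists_eq_succ_of_ne_zero (NeZero.ne n)
  rw [mem_cyclicInterval_iff_val_sub_lt hsn.le, sub_sub_cancel_left, Fin.coe_neg_one]
  omega

lemma cyclicInterval_injective {s : ℕ} (hs : 0 < s) (hsn : s < n) :
    Function.Injective (cyclicInterval (n := n) s) := by
  intro a b hab
  by_contra hne
  have ha : a ∈ cyclicInterval s b := hab ▸ mem_cyclicInterval.2 ⟨0, hs, by simp⟩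
  exact sub_one_notMem_cyclicInterval hsn a (hab ▸ sub_one_mem_cyclicInterval hsn.le ha hne)

lemma eq_univ_of_add_one_mem {X : Finset (Fin n)} (hX : X.Nonempty)
    (hcl : ∀ x ∈ X, x + 1 ∈ X) : X = univ := by
  obtain ⟨a, ha⟩ := hX
  have hshift : ∀ j : ℕ, a + j ∈ X := by
    intro j
    induction j with
    | zero => simpa using ha
    | succ j ih => simpa [add_assoc] using hcl _ ih
  refine eq_univ_of_forall fun x => ?_
  simpa using hshift (x - a).val

lemma card_lt_card_union_image_add_one {X : Finset (Fin n)} (hX : X.Nonempty)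
    (hXu : X ≠ univ) : #X < #(X ∪ X.image (· + 1)) := by
  refine card_lt_card (Finset.ssubset_iff_subset_ne.2 ⟨subset_union_left, fun h => hXu ?_⟩)
  refine eq_univ_of_add_one_mem hX fun x hx => ?_
  exact h ▸ mem_union_right _ (mem_image_of_mem _ hx)

lemma cyclicInterval_succ_succ (t : ℕ) (a : Fin n) :
    cyclicInterval (t + 1 + 1) a =
      cyclicInterval (t + 1) a ∪ (cyclicInterval (t + 1) a).image (· + 1) := by
  ext x
  simp only [mem_union, mem_image, mem_cyclicInterval]
  constructor
  · rintro ⟨_ | j, hj, rfl⟩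
    · exact Or.inl ⟨0, by omega, rfl⟩
    · exact Or.inr ⟨_, ⟨j, by omega, rfl⟩, by push_cast; ring⟩
  · rintro (⟨j, hj, rfl⟩ | ⟨_, ⟨j, hj, rfl⟩, rfl⟩)
    · exact ⟨j, by omega, rfl⟩
    · exact ⟨j + 1, by omega, by push_cast; ring⟩

lemma card_add_le_card_biUnion_cyclicInterval {M : Finset (Fin n)} (hM : M.Nonempty) (t : ℕ)
    (hne : M.biUnion (cyclicInterval (t + 1)) ≠ univ) :
    #M + t ≤ #(M.biUnion (cyclicInterval (t + 1))) := by
  induction t with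
  | zero =>
    have : M.biUnion (cyclicInterval 1) = M := by
      ext x; simp [mem_cyclicInterval]
    simp [this]
  | succ t ih =>
    set X := M.biUnion (cyclicInterval (t + 1))
    have hstep : M.biUnion (cyclicInterval (t + 1 + 1)) = X ∪ X.image (· + 1) := by
      rw [biUnion_image, ← biUnion_union]
      exact biUnion_congr rfl fun a _ => cyclicInterval_succ_succ t a
    rw [hstep] at hne ⊢
    have hXu : X ≠ univ := fun h => hne (by simp [h])
    have hX : X.Nonempty := by
      obtain ⟨a, ha⟩ := hM
      exact ⟨a, mem_biUnion.2 ⟨a, ha, mem_cyclicInterval.2 ⟨0, by omega, by simp⟩⟩⟩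
    have hgrow := card_lt_card_union_image_add_one hX hXu
    have hX_card := ih hXu
    omega

lemma card_filter_cyclicInterval_subset_le {s : ℕ} (hs : 0 < s) {V : Finset (Fin n)}
    (hV : V ≠ univ) : #{a | cyclicInterval s a ⊆ V} ≤ #V - (s - 1) := by
  set M : Finset (Fin n) := {a | cyclicInterval s a ⊆ V}
  rcases M.eq_empty_or_nonempty with hM | hM
  · simp [hM]
  obtain ⟨t, rfl⟩ : ∃ t, s = t + 1 := ⟨s - 1, by omega⟩
  have hsub : M.biUnion (cyclicInterval (t + 1)) ⊆ V :=
    biUnion_subset.2 fun a ha => (mem_filter.1 ha).2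
  have hgrow := card_add_le_card_biUnion_cyclicInterval hM t fun h =>
    hV (univ_subset_iff.1 (h ▸ hsub))
  have hle := card_le_card hsub
  omega

end CyclicInterval

lemma choose_mul_le_choose_mul {s v w : ℕ} (hs : 0 < s) (hvw : v ≤ w) :
    v.choose s * w ≤ w.choose s * v := by
  obtain ⟨s, rfl⟩ : ∃ t, s = t + 1 := ⟨s - 1, by omega⟩
  rcases v with _ | v
  · simp
  obtain ⟨w, rfl⟩ : ∃ u, w = u + 1 := ⟨w - 1, by omega⟩
  refine Nat.le_of_mul_le_mul_right (c := s + 1) ?_ (by omega)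
  calc (v + 1).choose (s + 1) * (w + 1) * (s + 1)
      = (v + 1) * v.choose s * (w + 1) := by rw [Nat.add_one_mul_choose_eq]; ring
    _ ≤ (v + 1) * w.choose s * (w + 1) := by gcongr; omega
    _ = (w + 1).choose (s + 1) * (v + 1) * (s + 1) := by
        rw [mul_right_comm ((w + 1).choose _), ← Nat.add_one_mul_choose_eq]; ring

lemma mul_choose_le_mul_of_le {c D s v w : ℕ} (hs : 0 < s) (hvw : v ≤ w)
    (h : c * w.choose s ≤ D * w) : c * v.choose s ≤ D * v := by
  rcases Nat.eq_zero_or_pos w with rfl | hw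
  · simp [Nat.le_zero.1 hvw, Nat.choose_eq_zero_of_lt hs]
  refine Nat.le_of_mul_le_mul_right ?_ hw
  calc c * v.choose s * w = c * (v.choose s * w) := by ring
    _ ≤ c * (w.choose s * v) := Nat.mul_le_mul_left c (choose_mul_le_choose_mul hs hvw)
    _ = c * w.choose s * v := by ring
    _ ≤ D * w * v := by gcongr
    _ = D * v * w := by ring

lemma card_filter_subset_le_choose {α : Type*} [DecidableEq α] {E : Finset (Finset α)} {s : ℕ}
    (hE : ∀ e ∈ E, #e = s) (V : Finset α) : #{e ∈ E | e ⊆ V} ≤ (#V).choose s := by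
  rw [← card_powersetCard]
  exact card_le_card fun e he =>
    mem_powersetCard.2 ⟨(mem_filter.1 he).2, hE e (mem_filter.1 he).1⟩

lemma exists_superset_cyclicIntervals {n s m : ℕ} [NeZero n] (hs : 0 < s) (hnm : n ≤ m)
    (hm : m ≤ n.choose s) :
    ∃ E : Finset (Finset (Fin n)), #E = m ∧ (∀ e ∈ E, #e = s) ∧
      ∀ V, V ≠ univ → #{e ∈ E | e ⊆ V} ≤ #V - (s - 1) + (m - n) := by
  have hsn : s ≤ n := by
    by_contra h
    rw [Nat.choose_eq_zero_of_lt (by omega)] at hm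
    exact NeZero.ne n (by omega)
  have hinj : Function.Injective (cyclicInterval (n := n) s) := by
    rcases hsn.lt_or_eq with hsn | rfl
    · exact cyclicInterval_injective hs hsn
    · -- `n ≤ m ≤ choose n n = 1`
      have : Subsingleton (Fin s) :=
        Fin.subsingleton_iff_le_one.2 (by simpa using hnm.trans hm)
      exact Function.injective_of_subsingleton _
  set I : Finset (Finset (Fin n)) := univ.image (cyclicInterval s)
  have hIcard : #I = n := by rw [card_image_of_injective _ hinj, card_univ, Fintype.card_fin]
  have hI : I ⊆ powersetCard s univ := image_subset_iff.2 fun a _ =>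
    mem_powersetCard.2 ⟨subset_univ _, card_cyclicInterval hsn a⟩
  obtain ⟨E, hIE, hE, hEcard⟩ := exists_subsuperset_card_eq hI (hIcard ▸ hnm)
    (by rwa [card_powersetCard, card_univ, Fintype.card_fin])
  refine ⟨E, hEcard, fun e he => (mem_powersetCard.1 (hE he)).2, fun V hV => ?_⟩
  have hsplit : {e ∈ E | e ⊆ V} ⊆ {e ∈ I | e ⊆ V} ∪ (E \ I) := by
    intro e he
    by_cases heI : e ∈ I <;> simp_all
  calc #{e ∈ E | e ⊆ V} ≤ #{e ∈ I | e ⊆ V} + #(E \ I) :=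
        (card_le_card hsplit).trans (card_union_le _ _)
    _ ≤ #{a | cyclicInterval s a ⊆ V} + (m - n) := by
        rw [filter_image, card_sdiff_of_subset hIE, hEcard, hIcard]
        exact Nat.add_le_add_right card_image_le _
    _ ≤ #V - (s - 1) + (m - n) := by grw [card_filter_cyclicInterval_subset_le hs hV]

lemma mul_choose_le_mul_pred {c D s k : ℕ} (hs : 0 < s)
    (hmin : ∀ k', 0 < k' → k' * D ≤ (k' * c).choose s → k ≤ k') :
    c * ((k - 1) * c).choose s ≤ D * ((k - 1) * c) := by
  rcases Nat.eq_zero_or_pos (k - 1) with hk | hk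
  · simp [hk, Nat.choose_eq_zero_of_lt hs]
  have hlt : ((k - 1) * c).choose s < (k - 1) * D := by
    by_contra! h
    have := hmin (k - 1) hk h
    omega
  calc c * ((k - 1) * c).choose s ≤ c * ((k - 1) * D) := by gcongr
    _ = D * ((k - 1) * c) := by ring

lemma mul_tsub_add_mul_le_add_mul {c r k v : ℕ} (hrv : r ≤ v) (hkc : k * c ≤ v + c) :
    c * (v - r + k * r) ≤ (c + r) * v := by
  obtain ⟨w, rfl⟩ := Nat.exists_eq_add_of_le hrv
  rw [Nat.add_sub_cancel_left]
  nlinarith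

/-- For sparsity `s < d`, let `k` be the smallest positive integer with
`C(k(d−s), s) ≥ k(d−1)`. Then there is a hypergraph `H₀` on `k(d−s)` vertices with
`k(d−1)` distinct hyperedges of cardinality `s` (each of weight `1`) whose expanded
multi-hypergraph — each hyperedge replaced by `d−s` copies — is `(d−1,0)`-tight:
the total (expanded) edge count equals `(d−1)` times the vertex count, and every
vertex-induced sub-multi-hypergraph satisfies the `(d−1,0)`-sparsity count. -/
theorem stmt15 (d s k : ℕ) (hs : 0 < s) (hsd : s < d) (hk : 0 < k)
    (hchoose : k * (d - 1) ≤ Nat.choose (k * (d - s)) s)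
    (hmin : ∀ k', 0 < k' → k' * (d - 1) ≤ Nat.choose (k' * (d - s)) s → k ≤ k') :
    ∃ E : Finset (Finset (Fin (k * (d - s)))),
      E.card = k * (d - 1) ∧ (∀ e ∈ E, e.card = s) ∧
      (d - s) * E.card = (d - 1) * (k * (d - s)) ∧
      ∀ V' : Finset (Fin (k * (d - s))),
        (d - s) * (E.filter (fun e => e ⊆ V')).card ≤ (d - 1) * V'.card := by
  have : NeZero (k * (d - s)) := ⟨(Nat.mul_pos hk (by omega)).ne'⟩
  obtain ⟨E, hEcard, hEs, hEsparse⟩ :=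
    exists_superset_cyclicIntervals hs (Nat.mul_le_mul_left k (by omega)) hchoose
  refine ⟨E, hEcard, hEs, by rw [hEcard]; ring, fun V => ?_⟩
  by_cases hVu : V = univ
  · calc (d - s) * #{e ∈ E | e ⊆ V} ≤ (d - s) * #E :=
          Nat.mul_le_mul_left _ (card_filter_le E _)
      _ = (d - 1) * #V := by rw [hVu, hEcard, card_univ, Fintype.card_fin]; ring
  by_cases hsmall : #V < s ∨ #V ≤ (k - 1) * (d - s)
  · calc (d - s) * #{e ∈ E | e ⊆ V} ≤ (d - s) * (#V).choose s :=
          Nat.mul_le_mul_left _ (card_filter_subset_le_choose hEs V)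
      _ ≤ (d - 1) * #V := hsmall.elim (fun h => by simp [Nat.choose_eq_zero_of_lt h])
          fun h => mul_choose_le_mul_of_le hs h (mul_choose_le_mul_pred hs hmin)
  obtain ⟨hsV, hbig⟩ : s ≤ #V ∧ (k - 1) * (d - s) < #V := by omega
  have hd : d - 1 = (d - s) + (s - 1) := by omega
  calc (d - s) * #{e ∈ E | e ⊆ V}
      ≤ (d - s) * (#V - (s - 1) + (k * (d - 1) - k * (d - s))) :=
        Nat.mul_le_mul_left _ (hEsparse V hVu)
    _ = (d - s) * (#V - (s - 1) + k * (s - 1)) := by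
        rw [hd, Nat.mul_add k, Nat.add_sub_cancel_left]
    _ ≤ (d - 1) * #V := hd ▸ mul_tsub_add_mul_le_add_mul (by omega) (by
        rw [Nat.sub_one_mul] at hbig; omega)
end

section
/- In the pebble game with parameters (k,0) on vertex set V: if the algorithm (starting with k pebbles on each vertex, performing add-edge moves that require at least 1 pebble on the vertices of the new hyperedge and remove one pebble, and pebble-shift moves) terminates with exactly 0 pebbles remaining, then the constructed hypergraph is (k,0)-tight; moreover at every stage the constructed hypergraph is (k,0)-sparse. -/
/-- A state of the `(k,0)`-pebble game: a list of placed hyperedges with their tail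
vertices, and a pebble count on each vertex. -/
structure PebbleState (V : Type*) where
  edges : List (Finset V × V)
  pebbles : V → ℕ

/-- The moves of the `(k,0)`-pebble game: `addEdge` requires at least one pebble on
the vertices of the new hyperedge, removes a pebble from some vertex `v` of the edge
and makes `v` its tail; `shift` moves a pebble from a vertex `v₁` of an edge with
tail `v₂` to `v₂` and re-tails the edge at `v₁`. -/
inductive PebbleStep {V : Type*} [DecidableEq V] : PebbleState V → PebbleState V → Prop
  | addEdge (s : PebbleState V) (e : Finset V) (v : V) (hv : v ∈ e)
      (htotal : 1 ≤ ∑ u ∈ e, s.pebbles u) (hvp : 0 < s.pebbles v) :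
      PebbleStep s ⟨(e, v) :: s.edges, Function.update s.pebbles v (s.pebbles v - 1)⟩
  | shift (s : PebbleState V) (e : Finset V) (v₂ : V) (he : (e, v₂) ∈ s.edges)
      (v₁ : V) (hv₁ : v₁ ∈ e) (hp : 0 < s.pebbles v₁) :
      PebbleStep s ⟨(e, v₁) :: s.edges.erase (e, v₂),
        Function.update (Function.update s.pebbles v₁ (s.pebbles v₁ - 1)) v₂
          (Function.update s.pebbles v₁ (s.pebbles v₁ - 1) v₂ + 1)⟩

/-!
Every move keeps two local invariants: at each vertex, the pebbles plus the number of hyperedges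
tailed there add up to `k`, and every tail lies in its hyperedge. Summing the first over all
vertices gives `k|V| − |E|` pebbles; a hyperedge spanned by `V'` has its tail in `V'`, so summing
over `V'` bounds the number of spanned hyperedges by `k|V'|`.
-/

theorem List.sum_countP_eq_countP_mem {α β : Type*} [DecidableEq β] (l : List α) (f : α → β)
    (s : Finset β) :
    ∑ b ∈ s, l.countP (fun a => decide (f a = b)) = l.countP (fun a => decide (f a ∈ s)) := by
  induction l with
  | nil => simp
  | cons a l ih => simp [List.countP_cons, Finset.sum_add_distrib, ih]

namespace PebbleState

variable {V : Type*} [DecidableEq V]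

def tailCount (E : List (Finset V × V)) (v : V) : ℕ :=
  E.countP (fun q => decide (q.2 = v))

lemma tailCount_cons (q : Finset V × V) (E : List (Finset V × V)) (v : V) :
    tailCount (q :: E) v = tailCount E v + if q.2 = v then 1 else 0 := by
  simp [tailCount, List.countP_cons]

lemma tailCount_erase_add {q : Finset V × V} {E : List (Finset V × V)} (hq : q ∈ E) (v : V) :
    tailCount (E.erase q) v + (if q.2 = v then 1 else 0) = tailCount E v := by
  rw [← tailCount_cons]
  exact ((List.perm_cons_erase hq).countP_eq _).symm

structure Invariant (k : ℕ) (s : PebbleState V) : Prop where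
  pebbles_add_tailCount : ∀ v, s.pebbles v + tailCount s.edges v = k
  tail_mem : ∀ q ∈ s.edges, q.2 ∈ q.1

lemma invariant_init (k : ℕ) : Invariant k ⟨([] : List (Finset V × V)), fun _ => k⟩ :=
  ⟨fun _ => by simp [tailCount], by simp⟩

lemma Invariant.step {k : ℕ} {s t : PebbleState V} (hs : s.Invariant k) (hst : PebbleStep s t) :
    t.Invariant k := by
  cases hst with
  | addEdge e v hv _ hvp =>
    refine ⟨fun u => ?_, ?_⟩
    · have hu := hs.pebbles_add_tailCount u
      simp only [tailCount_cons, Function.update_apply]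
      split_ifs <;> subst_vars <;> first | contradiction | omega
    · simpa [hv] using hs.tail_mem
  | shift e v₂ he v₁ hv₁ hp =>
    refine ⟨fun u => ?_, ?_⟩
    · have hu := hs.pebbles_add_tailCount u
      have herase := tailCount_erase_add he u
      simp only [tailCount_cons, Function.update_apply] at herase ⊢
      split_ifs at herase ⊢ <;> subst_vars <;> first | contradiction | omega
    · simpa [hv₁] using fun q hq => hs.tail_mem q (List.mem_of_mem_erase hq)

lemma Invariant.of_reachable {k : ℕ} {s : PebbleState V}
    (h : Relation.ReflTransGen PebbleStep ⟨([] : List (Finset V × V)), fun _ => k⟩ s) :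
    s.Invariant k := by
  induction h with
  | refl => exact invariant_init k
  | tail _ hst ih => exact ih.step hst

lemma Invariant.countP_subset_le {k : ℕ} {s : PebbleState V} (hs : s.Invariant k)
    (V' : Finset V) : s.edges.countP (fun q => decide (q.1 ⊆ V')) ≤ k * V'.card :=
  calc s.edges.countP (fun q => decide (q.1 ⊆ V'))
      ≤ s.edges.countP (fun q => decide (q.2 ∈ V')) :=
        List.countP_mono_left fun q hq hsub => by
          simpa using (of_decide_eq_true hsub) (hs.tail_mem q hq)
    _ = ∑ v ∈ V', tailCount s.edges v := (List.sum_countP_eq_countP_mem _ _ _).symm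
    _ ≤ ∑ _v ∈ V', k :=
        Finset.sum_le_sum fun v _ => (Nat.le_add_left _ _).trans_eq (hs.pebbles_add_tailCount v)
    _ = k * V'.card := by rw [Finset.sum_const, smul_eq_mul, mul_comm]

lemma Invariant.sum_pebbles_add_length [Fintype V] {k : ℕ} {s : PebbleState V}
    (hs : s.Invariant k) : ∑ v, s.pebbles v + s.edges.length = k * Fintype.card V := by
  have hlen : ∑ v, tailCount s.edges v = s.edges.length := by
    simp [tailCount, List.sum_countP_eq_countP_mem]
  rw [← hlen, ← Finset.sum_add_distrib, Finset.sum_congr rfl fun v _ => hs.pebbles_add_tailCount v,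
    Finset.sum_const, Finset.card_univ, smul_eq_mul, mul_comm]

end PebbleState

/-- Pebble game correctness for `(k,0)`: any state reachable from the initial state
(`k` pebbles on each vertex, no edges) is `(k,0)`-sparse, the number of remaining
pebbles is `k|V| − |E|`, and if the game terminates with exactly `0` pebbles then the
constructed (multi-)hypergraph is `(k,0)`-tight. -/
theorem stmt18 {V : Type*} [Fintype V] [DecidableEq V] (k : ℕ)
    (s : PebbleState V)
    (h : Relation.ReflTransGen PebbleStep ⟨([] : List (Finset V × V)), fun _ => k⟩ s) :
    (∀ V' : Finset V,
      (s.edges.countP (fun q => decide (q.1 ⊆ V'))) ≤ k * V'.card) ∧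
    (∑ v, s.pebbles v = k * Fintype.card V - s.edges.length) ∧
    ((∑ v, s.pebbles v = 0) → s.edges.length = k * Fintype.card V) := by
  have hs := PebbleState.Invariant.of_reachable h
  have hcount := hs.sum_pebbles_add_length
  exact ⟨hs.countP_subset_le, by omega, by omega⟩
end
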